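/- Let k ≥ 2 and define h_k(n) = ((2n+1)(2n+3)···(2n+2k+1)) / lcm(2n+1, 2n+3, ..., 2n+2k+1) for positive integers n. Then h_k is periodic and its smallest period equals L_k / (2^{⌊log_2 k⌋} · D_k), where L_k = lcm(1,...,k) and D_k = p^{⌊log_p k⌋} if v_p(k+1) ≥ ⌊log_p k⌋ for some odd prime p ≤ k, and D_k = 1 otherwise. -/

import Mathlib

/-!
For an odd prime `p` and `e = ⌊log_p k⌋`, comparing `p`-adic valuations of the product and of the
lcm gives `v_p(h_k(n)) = ∑_{1 ≤ j ≤ e} (c_j(n) - 1)`, where `c_j(n)` is the number of the `k + 1`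
odd numbers `2n + 1, …, 2n + 2k + 1` divisible by `p ^ j`; moreover `v_2(h_k(n)) = 0`. Each `c_j`
is `p ^ j`-periodic, and constant when `p ^ j ∣ k + 1`. Hence `v_p ∘ h_k` is constant if
`p ^ e ∣ k + 1`, and otherwise its periods are exactly the multiples of `p ^ e`: a period not
divisible by `p ^ e` would make the top count `c_e` periodic with period `p ^ (e - 1)`, which an
interval count of multiples of `p ^ e` cannot be. Finally, at most one odd prime `p ≤ k` has
`p ^ e ∣ k + 1`, since two of them would give `k + 1 ≥ p ^ e p' ^ e'`, contradicting
`k < p ^ (e + 1)` and `k < p' ^ (e' + 1)`. So the least period is the product of `p ^ e` over the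
remaining odd primes `p ≤ k`, that is `lcm(1, …, k) / (2 ^ ⌊log_2 k⌋ D_k)`.
-/

open Finset Function

namespace Function.Periodic

variable {α : Type*} {f : ℕ → α} {T U : ℕ}

theorem of_dvd (hT : Periodic f T) (hTU : T ∣ U) : Periodic f U := by
  obtain ⟨m, rfl⟩ := hTU
  rw [mul_comm]
  exact hT.nat_mul m

theorem nat_mod (hT : Periodic f T) (hU : Periodic f U) : Periodic f (T % U) := fun n =>
  calc f (n + T % U) = f (n + T % U + T / U * U) := (hU.nat_mul _ _).symm
    _ = f (n + T) := by rw [add_assoc, mul_comm, Nat.mod_add_div]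
    _ = f n := hT n

theorem nat_gcd (hT : Periodic f T) (hU : Periodic f U) : Periodic f (T.gcd U) := by
  induction T, U using Nat.gcd.induction with
  | H0 U => simpa using hU
  | H1 T U _ ih =>
    rw [Nat.gcd_rec]
    exact ih (hU.nat_mod hT) hT

theorem pow_of_not_dvd {p d : ℕ} (hp : p.Prime) (hT : Periodic f T) (hq : Periodic f (p ^ (d + 1)))
    (hTq : ¬ p ^ (d + 1) ∣ T) : Periodic f (p ^ d) := by
  obtain ⟨i, hi, hgcd⟩ := (Nat.dvd_prime_pow hp).1 (Nat.gcd_dvd_right T (p ^ (d + 1)))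
  have hid : i ≤ d := by
    by_contra! hdi
    apply hTq
    rw [← show i = d + 1 by omega, ← hgcd]
    exact Nat.gcd_dvd_left _ _
  exact (hT.nat_gcd hq).of_dvd (hgcd ▸ pow_dvd_pow p hid)

theorem periodic_of_forall_ge (hU : Periodic f U) (hU0 : 0 < U) {N : ℕ}
    (h : ∀ n, N ≤ n → f (n + T) = f n) : Periodic f T := fun n =>
  calc f (n + T) = f (n + T + N * U) := (hU.nat_mul N _).symm
    _ = f (n + N * U + T) := by rw [add_right_comm]
    _ = f (n + N * U) := h _ (by nlinarith)
    _ = f n := hU.nat_mul N n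

end Function.Periodic

theorem Nat.count_dvd_two_mul_add_one (r m : ℕ) :
    Nat.count (fun x => 2 * r + 1 ∣ 2 * x + 1) m = (m + r) / (2 * r + 1) := by
  induction m with
  | zero => simp [Nat.div_eq_of_lt (show r < 2 * r + 1 by omega)]
  | succ m ih =>
    have hshift : 2 * r + 1 ∣ m + r + 1 ↔ 2 * r + 1 ∣ 2 * m + 1 := by
      rw [← (Nat.coprime_two_right.2 (odd_two_mul_add_one r)).dvd_mul_left,
        show 2 * (m + r + 1) = 2 * m + 1 + (2 * r + 1) by ring, Nat.dvd_add_self_right]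
    simp only [Nat.count_succ, ih, add_right_comm m 1 r, Nat.succ_div, hshift]

theorem Nat.periodic_iff_forall_factorization {α : Type*} [Add α] {f : α → ℕ} {c : α}
    (hf : ∀ x, f x ≠ 0) :
    Periodic f c ↔ ∀ p, p.Prime → Periodic (fun x => (f x).factorization p) c := by
  refine ⟨fun h p _ x => by simp only [h x], fun h x => Nat.eq_of_factorization_eq (hf _) (hf _)
    fun p => ?_⟩
  by_cases pp : p.Prime
  · exact h p pp x
  · simp [Nat.factorization_eq_zero_of_not_prime _ pp]

theorem Nat.factorization_eq_card_Icc_pow_dvd {m p b : ℕ} (pp : p.Prime) (hm : m ≠ 0)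
    (hb : m ≤ p ^ b) : m.factorization p = #{j ∈ Icc 1 b | p ^ j ∣ m} := by
  rw [Nat.factorization_eq_card_pow_dvd m pp, Nat.Ico_filter_pow_dvd_eq pp hm hb]

theorem Nat.Prime.pow_dvd_finset_lcm_iff {ι : Type*} {s : Finset ι} {f : ι → ℕ} {p j : ℕ}
    (pp : p.Prime) (hj : j ≠ 0) (hf : ∀ i ∈ s, f i ≠ 0) :
    p ^ j ∣ s.lcm f ↔ ∃ i ∈ s, p ^ j ∣ f i := by
  rw [pp.pow_dvd_iff_le_factorization (lcm_ne_zero_iff.2 hf), Finset.factorization_lcm hf,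
    Finset.le_sup_iff (by simpa [pos_iff_ne_zero] using hj)]
  exact exists_congr fun i => and_congr_right fun hi =>
    (pp.pow_dvd_iff_le_factorization (hf i hi)).symm

def oddDvdCount (k q n : ℕ) : ℕ := #{i ∈ range (k + 1) | q ∣ 2 * n + 2 * i + 1}

section

variable {k q : ℕ}

theorem periodic_oddDvdCount (k q : ℕ) : Periodic (oddDvdCount k q) q := fun n => by
  unfold oddDvdCount
  congr 1
  refine filter_congr fun i _ => ?_
  rw [show 2 * (n + q) + 2 * i + 1 = 2 * n + 2 * i + 1 + q * 2 by ring,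
    Nat.dvd_add_left (dvd_mul_right q 2)]

theorem oddDvdCount_eq (k r n : ℕ) :
    oddDvdCount k (2 * r + 1) n = (n + (k + 1) + r) / (2 * r + 1) - (n + r) / (2 * r + 1) := by
  rw [← Nat.count_dvd_two_mul_add_one, ← Nat.count_dvd_two_mul_add_one, Nat.count_add,
    Nat.add_sub_cancel_left, Nat.count_eq_card_filter_range, oddDvdCount]
  refine congrArg card (filter_congr fun i _ => ?_)
  rw [mul_add]

theorem one_le_oddDvdCount (hq : Odd q) (hqk : q ≤ k + 1) (n : ℕ) : 1 ≤ oddDvdCount k q n := by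
  obtain ⟨r, rfl⟩ := hq
  have := Nat.div_le_div_right (c := 2 * r + 1)
    (show n + r + (2 * r + 1) ≤ n + (k + 1) + r by omega)
  rw [Nat.add_div_right _ (by omega)] at this
  rw [oddDvdCount_eq]
  omega

theorem oddDvdCount_le_one (hq : Odd q) (hkq : k < q) (n : ℕ) : oddDvdCount k q n ≤ 1 := by
  obtain ⟨r, rfl⟩ := hq
  have := Nat.div_le_div_right (c := 2 * r + 1)
    (show n + (k + 1) + r ≤ n + r + (2 * r + 1) by omega)
  rw [Nat.add_div_right _ (by omega)] at this
  rw [oddDvdCount_eq]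
  omega

theorem periodic_oddDvdCount_of_dvd (hq : Odd q) (hqk : q ∣ k + 1) (T : ℕ) :
    Periodic (oddDvdCount k q) T := by
  obtain ⟨r, rfl⟩ := hq
  obtain ⟨m, hm⟩ := hqk
  have hconst : ∀ n, oddDvdCount k (2 * r + 1) n = m := fun n => by
    rw [oddDvdCount_eq, hm, show n + (2 * r + 1) * m + r = n + r + m * (2 * r + 1) by ring,
      Nat.add_mul_div_right _ _ (by omega)]
    omega
  exact fun n => by rw [hconst, hconst]

theorem not_periodic_oddDvdCount {p e : ℕ} (hp : p.Prime) (hq : Odd (p ^ (e + 1)))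
    (hqk : ¬ p ^ (e + 1) ∣ k + 1) : ¬ Periodic (oddDvdCount k (p ^ (e + 1))) (p ^ e) := by
  intro hc
  obtain ⟨r, hr⟩ := hq
  rw [hr] at hc hqk
  let F : ℕ → ℕ := fun m => (m + r) / (2 * r + 1)
  have hFmono : Monotone F := fun a b hab => Nat.div_le_div_right (by omega)
  have hFq : ∀ m, F (m + (2 * r + 1)) = F m + 1 := fun m => by
    simp only [F, add_right_comm m (2 * r + 1) r, Nat.add_div_right _ (show 0 < 2 * r + 1 by omega)]
  -- `G m` counts the `x ∈ [m, m + p ^ e)` with `p ^ (e + 1) ∣ 2x + 1`. By `hc` it has period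
  -- `k + 1`, hence period `p ^ e`; but its values at `0, p ^ e, …, (p - 1) p ^ e` add up to `1`.
  let G : ℕ → ℕ := fun m => F (m + p ^ e) - F m
  have hFG : ∀ m, F (m + p ^ e) = F m + G m := fun m => by
    have := hFmono (show m ≤ m + p ^ e by omega)
    simp only [G]
    omega
  have hGk : Periodic G (k + 1) := fun n => by
    have hcn := hc n
    rw [oddDvdCount_eq, oddDvdCount_eq, add_right_comm n (p ^ e) (k + 1)] at hcn
    change F (n + (k + 1) + p ^ e) - F (n + p ^ e) = F (n + (k + 1)) - F n at hcn
    have := hFmono (show n ≤ n + (k + 1) by omega)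
    have := hFmono (show n + p ^ e ≤ n + (k + 1) + p ^ e by omega)
    have := hFG n
    have := hFG (n + (k + 1))
    omega
  have hGq : Periodic G (2 * r + 1) := fun n => by
    simp only [G, add_right_comm n (2 * r + 1) (p ^ e), hFq]
    omega
  have hGh : Periodic G (p ^ e) := hGk.pow_of_not_dvd hp (hr ▸ hGq) (hr ▸ hqk)
  have hFh : ∀ t, F (t * p ^ e) = F 0 + t * G 0 := fun t => by
    induction t with
    | zero => simp
    | succ t ih =>
      have hGt : G (t * p ^ e) = G 0 := by simpa using hGh.nat_mul t 0
      rw [add_one_mul, hFG, ih, hGt, add_one_mul, add_assoc]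
  have hpG : p * G 0 = 1 := by
    have := hFh p
    rw [← pow_succ', hr, ← zero_add (2 * r + 1), hFq] at this
    omega
  exact hp.one_lt.ne' (Nat.eq_one_of_mul_eq_one_right hpG)

end

-- `h_k(n)`
def prodDivLcm (k n : ℕ) : ℕ :=
  (∏ i ∈ range (k + 1), (2 * n + 2 * i + 1)) / (range (k + 1)).lcm (fun i => 2 * n + 2 * i + 1)

theorem prodDivLcm_ne_zero (k n : ℕ) : prodDivLcm k n ≠ 0 :=
  (Nat.div_ne_zero_iff_of_dvd (lcm_dvd_prod _ _)).2
    ⟨prod_ne_zero_iff.2 fun _ _ => by omega, lcm_ne_zero_iff.2 fun _ _ => by omega⟩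

theorem factorization_prodDivLcm_eq_sum_Icc (k n : ℕ) {p B : ℕ} (pp : p.Prime)
    (hB : ∏ i ∈ range (k + 1), (2 * n + 2 * i + 1) ≤ p ^ B) :
    (prodDivLcm k n).factorization p = ∑ j ∈ Icc 1 B, (oddDvdCount k (p ^ j) n - 1) := by
  set a : ℕ → ℕ := fun i => 2 * n + 2 * i + 1
  have ha : ∀ i ∈ range (k + 1), a i ≠ 0 := fun i _ => Nat.succ_ne_zero _
  have hPpos : 0 < ∏ i ∈ range (k + 1), a i := prod_pos fun i _ => Nat.succ_pos _
  have hP : (∏ i ∈ range (k + 1), a i).factorization p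
      = ∑ j ∈ Icc 1 B, oddDvdCount k (p ^ j) n := by
    simp only [Nat.factorization_prod ha, Finsupp.coe_finsetSum, Finset.sum_apply, oddDvdCount,
      card_filter]
    rw [sum_comm]
    refine sum_congr rfl fun i hi => ?_
    rw [← card_filter, Nat.factorization_eq_card_Icc_pow_dvd pp (ha i hi)
      ((Nat.le_of_dvd hPpos (dvd_prod_of_mem a hi)).trans hB)]
  have hL : ((range (k + 1)).lcm a).factorization p
      = #{j ∈ Icc 1 B | 0 < oddDvdCount k (p ^ j) n} := by
    rw [Nat.factorization_eq_card_Icc_pow_dvd pp (lcm_ne_zero_iff.2 ha)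
      ((Nat.le_of_dvd hPpos (lcm_dvd_prod _ _)).trans hB)]
    refine congrArg card (filter_congr fun j hj => ?_)
    rw [pp.pow_dvd_finset_lcm_iff (by grind) ha, oddDvdCount, card_pos, filter_nonempty_iff]
  rw [prodDivLcm, Nat.factorization_div (lcm_dvd_prod _ _), Finsupp.tsub_apply, hP, hL,
    card_filter, ← sum_tsub_distrib _ fun j _ => by split_ifs <;> omega]
  exact sum_congr rfl fun j _ => by split_ifs <;> omega

theorem factorization_prodDivLcm (k n : ℕ) {p : ℕ} (pp : p.Prime) (hp : Odd p) :
    (prodDivLcm k n).factorization p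
      = ∑ j ∈ Icc 1 (Nat.log p k), (oddDvdCount k (p ^ j) n - 1) := by
  have hkP : k < ∏ i ∈ range (k + 1), (2 * n + 2 * i + 1) :=
    lt_of_lt_of_le (by omega) (Nat.le_of_dvd (prod_pos fun i _ => by omega)
      (dvd_prod_of_mem _ (self_mem_range_succ k)))
  rw [factorization_prodDivLcm_eq_sum_Icc k n pp (Nat.lt_pow_self pp.one_lt).le]
  refine (sum_subset (Icc_subset_Icc_right ((Nat.log_le_self p k).trans hkP.le))
    fun j hj hje => ?_).symm
  have hkj : k < p ^ j := (Nat.lt_pow_succ_log_self pp.one_lt k).trans_le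
    (Nat.pow_le_pow_right pp.pos (by grind))
  have := oddDvdCount_le_one hp.pow hkj n
  omega

theorem factorization_prodDivLcm_two (k n : ℕ) : (prodDivLcm k n).factorization 2 = 0 := by
  rw [factorization_prodDivLcm_eq_sum_Icc k n Nat.prime_two (Nat.lt_pow_self one_lt_two).le]
  refine sum_eq_zero fun j hj => ?_
  have h2 : 2 ∣ 2 ^ j := dvd_pow_self 2 (by grind)
  have : oddDvdCount k (2 ^ j) n = 0 :=
    card_eq_zero.2 (filter_eq_empty_iff.2 fun i _ h => by have := h2.trans h; omega)
  omega

theorem periodic_factorization_prodDivLcm_iff (k : ℕ) {p : ℕ} (pp : p.Prime) (hp : Odd p)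
    (T : ℕ) : Periodic (fun n => (prodDivLcm k n).factorization p) T ↔
      p ^ Nat.log p k ∣ k + 1 ∨ p ^ Nat.log p k ∣ T := by
  have hper : ∀ {T}, p ^ Nat.log p k ∣ k + 1 ∨ p ^ Nat.log p k ∣ T →
      Periodic (fun n => (prodDivLcm k n).factorization p) T := fun {T} h n => by
    simp only [factorization_prodDivLcm k _ pp hp]
    refine sum_congr rfl fun j hj => ?_
    have hje : p ^ j ∣ p ^ Nat.log p k := pow_dvd_pow p (mem_Icc.1 hj).2
    rcases h with h | h
    · rw [periodic_oddDvdCount_of_dvd hp.pow (hje.trans h) T n]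
    · rw [(periodic_oddDvdCount k (p ^ j)).of_dvd (hje.trans h) n]
  refine ⟨fun hT => ?_, hper⟩
  by_contra! h
  obtain ⟨d, hd⟩ : ∃ d, Nat.log p k = d + 1 :=
    Nat.exists_eq_succ_of_ne_zero fun he => h.1 (by simp [he])
  have hdk : p ^ (d + 1) ≤ k :=
    hd ▸ Nat.pow_log_le_self p fun hk => by simp [hk] at hd
  rw [hd] at h hper
  have hf := hT.pow_of_not_dvd pp (hper (Or.inr dvd_rfl)) h.2
  refine not_periodic_oddDvdCount pp hp.pow h.1 fun n => ?_
  have hfn := hf n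
  simp only [factorization_prodDivLcm k _ pp hp, hd, sum_Icc_succ_top (Nat.le_add_left 1 d)] at hfn
  rw [sum_congr rfl fun j hj => by
    rw [(periodic_oddDvdCount k (p ^ j)).of_dvd (pow_dvd_pow p (mem_Icc.1 hj).2) n]] at hfn
  have := one_le_oddDvdCount hp.pow (by omega : p ^ (d + 1) ≤ k + 1) n
  have := one_le_oddDvdCount hp.pow (by omega : p ^ (d + 1) ≤ k + 1) (n + p ^ d)
  omega

theorem le_of_pow_log_dvd_succ {k p p' : ℕ} (hp : p.Prime) (hp' : p'.Prime) (hne : p ≠ p')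
    (hp'k : p' ≤ k) (hd : p ^ Nat.log p k ∣ k + 1) (hd' : p' ^ Nat.log p' k ∣ k + 1) :
    p' ≤ p := by
  have hmul :=
    (Nat.Coprime.pow _ _ ((Nat.coprime_primes hp hp').2 hne)).mul_dvd_of_dvd_of_dvd hd hd'
  have h : p ^ Nat.log p k * p' ^ Nat.log p' k ≤ p ^ Nat.log p k * p :=
    calc _ ≤ k + 1 := Nat.le_of_dvd k.succ_pos hmul
      _ ≤ p ^ (Nat.log p k + 1) := Nat.lt_pow_succ_log_self hp.one_lt k
      _ = _ := pow_succ _ _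
  calc p' ≤ p' ^ Nat.log p' k := Nat.le_self_pow (Nat.log_pos hp'.one_lt hp'k).ne' p'
    _ ≤ p := Nat.le_of_mul_le_mul_left h (pow_pos hp.pos _)

theorem eq_of_pow_log_dvd_succ {k p p' : ℕ} (hp : p.Prime) (hp' : p'.Prime) (hpk : p ≤ k)
    (hp'k : p' ≤ k) (hd : p ^ Nat.log p k ∣ k + 1) (hd' : p' ^ Nat.log p' k ∣ k + 1) : p = p' := by
  by_contra hne
  exact hne ((le_of_pow_log_dvd_succ hp' hp (Ne.symm hne) hpk hd' hd).antisymm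
    (le_of_pow_log_dvd_succ hp hp' hne hp'k hd hd'))

-- `D` is the product of the `p ^ ⌊log_p k⌋`, `p` an odd prime, that divide `k + 1`.
def IsExceptionalPart (k D : ℕ) : Prop :=
  D ≠ 0 ∧ ∀ p, p.Prime →
    D.factorization p = if p ≠ 2 ∧ p ^ Nat.log p k ∣ k + 1 then Nat.log p k else 0

theorem isExceptionalPart_pow_log {k p₀ : ℕ} (hp₀ : p₀.Prime) (hodd : Odd p₀) (hp₀k : p₀ ≤ k)
    (hd₀ : p₀ ^ Nat.log p₀ k ∣ k + 1) : IsExceptionalPart k (p₀ ^ Nat.log p₀ k) := by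
  refine ⟨pow_ne_zero _ hp₀.ne_zero, fun p pp => ?_⟩
  rw [hp₀.factorization_pow, Finsupp.single_apply]
  by_cases h : p₀ = p
  · subst h
    rw [if_pos rfl, if_pos ⟨hodd.ne_two_of_dvd_nat dvd_rfl, hd₀⟩]
  · rw [if_neg h]
    split_ifs with hc
    · by_cases hpk : p ≤ k
      · exact absurd (eq_of_pow_log_dvd_succ hp₀ pp hp₀k hpk hd₀ hc.2) h
      · exact (Nat.log_of_lt (by omega)).symm
    · rfl

theorem isExceptionalPart_one {k : ℕ}
    (h : ∀ p, p.Prime → p ≠ 2 → p ≤ k → ¬ p ^ Nat.log p k ∣ k + 1) : IsExceptionalPart k 1 := by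
  refine ⟨one_ne_zero, fun p pp => ?_⟩
  rw [Nat.factorization_one, Finsupp.coe_zero, Pi.zero_apply]
  split_ifs with hc
  · exact (Nat.log_of_lt (not_le.1 fun hpk => h p pp hc.1 hpk hc.2)).symm
  · rfl

section

variable {k D : ℕ}

theorem IsExceptionalPart.factorization_two_pow_log_mul (hD : IsExceptionalPart k D) {p : ℕ}
    (pp : p.Prime) : (2 ^ Nat.log 2 k * D).factorization p =
      if p = 2 ∨ p ^ Nat.log p k ∣ k + 1 then Nat.log p k else 0 := by
  rw [Nat.factorization_mul (by positivity) hD.1, Finsupp.add_apply,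
    Nat.prime_two.factorization_pow, Finsupp.single_apply, hD.2 p pp]
  rcases eq_or_ne p 2 with rfl | hp2
  · simp
  · simp [hp2, hp2.symm]

theorem IsExceptionalPart.two_pow_log_mul_dvd (hD : IsExceptionalPart k D) :
    2 ^ Nat.log 2 k * D ∣ Nat.lcmUpto k := by
  rw [← Nat.factorization_prime_le_iff_dvd (mul_ne_zero (by positivity) hD.1)
    (Nat.lcmUpto_ne_zero k)]
  intro p pp
  rw [hD.factorization_two_pow_log_mul pp, Nat.factorization_lcmUpto k pp]
  split_ifs <;> omega

theorem IsExceptionalPart.lcmUpto_div_pos (hD : IsExceptionalPart k D) :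
    0 < Nat.lcmUpto k / (2 ^ Nat.log 2 k * D) :=
  Nat.div_pos (Nat.le_of_dvd (Nat.lcmUpto_pos k) hD.two_pow_log_mul_dvd)
    (Nat.pos_of_ne_zero (mul_ne_zero (by positivity) hD.1))

theorem IsExceptionalPart.factorization_lcmUpto_div (hD : IsExceptionalPart k D) {p : ℕ}
    (pp : p.Prime) : (Nat.lcmUpto k / (2 ^ Nat.log 2 k * D)).factorization p =
      if p = 2 ∨ p ^ Nat.log p k ∣ k + 1 then 0 else Nat.log p k := by
  rw [Nat.factorization_div hD.two_pow_log_mul_dvd, Finsupp.tsub_apply,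
    Nat.factorization_lcmUpto k pp, hD.factorization_two_pow_log_mul pp]
  split_ifs <;> omega

theorem IsExceptionalPart.periodic_prodDivLcm_iff (hD : IsExceptionalPart k D) {T : ℕ}
    (hT : T ≠ 0) : Periodic (prodDivLcm k) T ↔ Nat.lcmUpto k / (2 ^ Nat.log 2 k * D) ∣ T := by
  rw [Nat.periodic_iff_forall_factorization (prodDivLcm_ne_zero k),
    ← Nat.factorization_prime_le_iff_dvd hD.lcmUpto_div_pos.ne' hT]
  refine forall₂_congr fun p pp => ?_
  rw [hD.factorization_lcmUpto_div pp]
  rcases eq_or_ne p 2 with rfl | hp2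
  · simp [factorization_prodDivLcm_two, Periodic]
  · rw [periodic_factorization_prodDivLcm_iff k pp (pp.odd_of_ne_two hp2),
      pp.pow_dvd_iff_le_factorization hT]
    split_ifs with h
    · exact iff_of_true (Or.inl (h.resolve_left hp2)) (Nat.zero_le _)
    · rw [or_iff_right fun hd => h (Or.inr hd)]

theorem IsExceptionalPart.isLeast_period (hD : IsExceptionalPart k D) :
    IsLeast {T | 0 < T ∧ ∀ n : ℕ, 1 ≤ n → prodDivLcm k (n + T) = prodDivLcm k n}
      (Nat.lcmUpto k / (2 ^ Nat.log 2 k * D)) := by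
  have hper := (hD.periodic_prodDivLcm_iff hD.lcmUpto_div_pos.ne').2 dvd_rfl
  exact ⟨⟨hD.lcmUpto_div_pos, fun n _ => hper n⟩, fun T ⟨hT, hTn⟩ => Nat.le_of_dvd hT
    ((hD.periodic_prodDivLcm_iff hT.ne').1 (hper.periodic_of_forall_ge hD.lcmUpto_div_pos hTn))⟩

end

theorem stmt19_general (k : ℕ) :
    ∃ D : ℕ,
      ((∃ p : ℕ, p.Prime ∧ Odd p ∧ p ≤ k ∧ Nat.log p k ≤ padicValNat p (k + 1) ∧
          D = p ^ Nat.log p k) ∨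
        ((¬ ∃ p : ℕ, p.Prime ∧ Odd p ∧ p ≤ k ∧ Nat.log p k ≤ padicValNat p (k + 1)) ∧
          D = 1)) ∧
      IsLeast {T : ℕ | 0 < T ∧ ∀ n : ℕ, 1 ≤ n →
          (∏ i ∈ Finset.range (k+1), (2 * (n + T) + 2 * i + 1)) /
              (Finset.range (k+1)).lcm (fun i => 2 * (n + T) + 2 * i + 1) =
            (∏ i ∈ Finset.range (k+1), (2 * n + 2 * i + 1)) /
              (Finset.range (k+1)).lcm (fun i => 2 * n + 2 * i + 1)}
        ((Finset.Icc 1 k).lcm id / (2 ^ Nat.log 2 k * D)) := by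
  have hval : ∀ p, p.Prime → (Nat.log p k ≤ padicValNat p (k + 1) ↔ p ^ Nat.log p k ∣ k + 1) :=
    fun p pp => by
      have := Fact.mk pp
      exact (padicValNat_dvd_iff_le k.succ_ne_zero).symm
  by_cases hexc : ∃ p : ℕ, p.Prime ∧ Odd p ∧ p ≤ k ∧ Nat.log p k ≤ padicValNat p (k + 1)
  · obtain ⟨p₀, hp₀, hodd, hp₀k, hv⟩ := hexc
    exact ⟨_, Or.inl ⟨p₀, hp₀, hodd, hp₀k, hv, rfl⟩,
      (isExceptionalPart_pow_log hp₀ hodd hp₀k ((hval p₀ hp₀).1 hv)).isLeast_period⟩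
  · refine ⟨1, Or.inr ⟨hexc, rfl⟩, (isExceptionalPart_one fun p pp hp2 hpk hd => ?_).isLeast_period⟩
    exact hexc ⟨p, pp, pp.odd_of_ne_two hp2, hpk, (hval p pp).2 hd⟩

theorem stmt19 (k : ℕ) (hk : 2 ≤ k) :
    ∃ D : ℕ,
      ((∃ p : ℕ, p.Prime ∧ Odd p ∧ p ≤ k ∧ Nat.log p k ≤ padicValNat p (k + 1) ∧
          D = p ^ Nat.log p k) ∨
        ((¬ ∃ p : ℕ, p.Prime ∧ Odd p ∧ p ≤ k ∧ Nat.log p k ≤ padicValNat p (k + 1)) ∧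
          D = 1)) ∧
      IsLeast {T : ℕ | 0 < T ∧ ∀ n : ℕ, 1 ≤ n →
          (∏ i ∈ Finset.range (k+1), (2 * (n + T) + 2 * i + 1)) /
              (Finset.range (k+1)).lcm (fun i => 2 * (n + T) + 2 * i + 1) =
            (∏ i ∈ Finset.range (k+1), (2 * n + 2 * i + 1)) /
              (Finset.range (k+1)).lcm (fun i => 2 * n + 2 * i + 1)}
        ((Finset.Icc 1 k).lcm id / (2 ^ Nat.log 2 k * D)) :=
  stmt19_general k
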